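/- The subspace of polyradial L¹ functions on ℍ_n (functions f with f(z,u) depending only on |z₁|,…,|z_n| and u, identifying z ∈ ℝ^{2n} with (z₁,…,z_n) ∈ ℂⁿ) is a commutative subalgebra of the convolution algebra L¹(ℍ_n): if f₁, f₂ are polyradial then f₁ ⋆ f₂ = f₂ ⋆ f₁. -/

import Mathlib

open MeasureTheory

/-- The Heisenberg group `ℍ_n = ℂⁿ × ℝ`. -/
noncomputable def HmulC (n : ℕ) (a b : (Fin n → ℂ) × ℝ) : (Fin n → ℂ) × ℝ :=
  (a.1 + b.1, a.2 + b.2 + (1 / 2) * ∑ i, (a.1 i * (starRingEnd ℂ) (b.1 i)).im)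

noncomputable def HinvC (n : ℕ) (a : (Fin n → ℂ) × ℝ) : (Fin n → ℂ) × ℝ :=
  (-a.1, -a.2)

/-- Group convolution on `ℍ_n`. -/
noncomputable def convC (n : ℕ) (f₁ f₂ : (Fin n → ℂ) × ℝ → ℂ) (g : (Fin n → ℂ) × ℝ) : ℂ :=
  ∫ h, f₁ h * f₂ (HmulC n (HinvC n h) g)

/-- `f` is polyradial if it is invariant under all torus rotations
`(z₁,…,z_n,u) ↦ (e^{iφ₁}z₁,…,e^{iφ_n}z_n,u)`. -/
def Polyradial (n : ℕ) (f : (Fin n → ℂ) × ℝ → ℂ) : Prop :=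
  ∀ φ : Fin n → ℝ, ∀ g : (Fin n → ℂ) × ℝ,
    f (fun i => Complex.exp (Complex.I * φ i) * g.1 i, g.2) = f g

/-! Fix `g = (w, v)` and let `R` act on each `zᵢ` by the reflection of `ℂ` across the line `ℝ wᵢ`.
`R` preserves Lebesgue measure and every polyradial function, and `(R k)⁻¹ g = R (g k⁻¹)`, since
`R` fixes `w` and reverses the symplectic form against it. Substituting `h = R k` in
`(f₁ ⋆ f₂)(g) = ∫ f₁(h) f₂(h⁻¹ g)` therefore gives `∫ f₁(k) f₂(g k⁻¹)`, which is `(f₂ ⋆ f₁)(g)`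
after the substitution `h = g k⁻¹`. -/

open Complex ComplexConjugate

noncomputable def reflCoeff (w : ℂ) : ℂ :=
  if w = 0 then 1 else w / conj w

lemma norm_reflCoeff (w : ℂ) : ‖reflCoeff w‖ = 1 := by
  unfold reflCoeff
  split_ifs with h
  · simp
  · rw [norm_div, norm_conj, div_self (norm_ne_zero_iff.mpr h)]

lemma reflCoeff_mul_conj (w : ℂ) : reflCoeff w * conj w = w := by
  unfold reflCoeff
  split_ifs with h
  · simp [h]
  · exact div_mul_cancel₀ w ((map_ne_zero _).mpr h)

/-- The reflection of `ℂ` across the real line through `w`. -/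
noncomputable def reflectLine (w z : ℂ) : ℂ :=
  reflCoeff w * conj z

lemma norm_reflectLine (w z : ℂ) : ‖reflectLine w z‖ = ‖z‖ := by
  simp [reflectLine, norm_reflCoeff]

lemma reflectLine_involutive (w : ℂ) : Function.Involutive (reflectLine w) := by
  intro z
  rw [reflectLine, reflectLine, map_mul, conj_conj, ← mul_assoc, mul_conj, normSq_eq_norm_sq,
    norm_reflCoeff]
  simp

lemma reflectLine_self_sub (w z : ℂ) : reflectLine w (w - z) = w - reflectLine w z := by
  rw [reflectLine, reflectLine, map_sub, mul_sub, reflCoeff_mul_conj]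

lemma reflectLine_mul_conj (w z : ℂ) : reflectLine w z * conj w = w * conj z := by
  rw [reflectLine, mul_right_comm, reflCoeff_mul_conj]

lemma measurePreserving_reflectLine (w : ℂ) :
    MeasurePreserving (reflectLine w) volume volume := by
  have hmem : reflCoeff w ∈ Submonoid.unitSphere ℂ := by
    simpa [Submonoid.unitSphere] using norm_reflCoeff w
  convert (conjLIE.trans (rotation ⟨reflCoeff w, hmem⟩)).measurePreserving using 1
  · rfl
  · rfl
  · ext z
    exact (rotation_apply ⟨reflCoeff w, hmem⟩ (conj z)).symm

lemma exists_exp_mul_eq_of_norm_eq {a b : ℂ} (h : ‖a‖ = ‖b‖) : ∃ φ : ℝ, exp (I * φ) * b = a := by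
  rcases eq_or_ne b 0 with rfl | hb
  · exact ⟨0, by simpa [eq_comm] using h⟩
  · refine ⟨arg (a / b), ?_⟩
    have hab : ‖a / b‖ = 1 := by rw [norm_div, h, div_self (norm_ne_zero_iff.mpr hb)]
    have := norm_mul_exp_arg_mul_I (a / b)
    rw [hab, ofReal_one, one_mul, mul_comm] at this
    rw [this, div_mul_cancel₀ a hb]

section Heisenberg

variable {n : ℕ}

lemma Polyradial.apply_eq_of_norm_eq {f : (Fin n → ℂ) × ℝ → ℂ} (hf : Polyradial n f)
    {p q : (Fin n → ℂ) × ℝ} (hz : ∀ i, ‖p.1 i‖ = ‖q.1 i‖) (hu : p.2 = q.2) : f p = f q := by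
  choose φ hφ using fun i => exists_exp_mul_eq_of_norm_eq (hz i)
  rw [← hf φ q]
  exact congrArg f (Prod.ext (funext fun i => (hφ i).symm) hu)

noncomputable def reflectThrough (w : Fin n → ℂ) (p : (Fin n → ℂ) × ℝ) : (Fin n → ℂ) × ℝ :=
  (fun i => reflectLine (w i) (p.1 i), p.2)

lemma Polyradial.apply_reflectThrough {f : (Fin n → ℂ) × ℝ → ℂ} (hf : Polyradial n f)
    (w : Fin n → ℂ) (p : (Fin n → ℂ) × ℝ) : f (reflectThrough w p) = f p :=
  hf.apply_eq_of_norm_eq (fun i => norm_reflectLine (w i) (p.1 i)) rfl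

lemma reflectThrough_involutive (w : Fin n → ℂ) : Function.Involutive (reflectThrough w) := by
  intro p
  simp only [reflectThrough, reflectLine_involutive (w _) _]

lemma measurePreserving_reflectThrough (w : Fin n → ℂ) :
    MeasurePreserving (reflectThrough w) volume volume := by
  rw [Measure.volume_eq_prod]
  exact (measurePreserving_pi _ _ fun i => measurePreserving_reflectLine (w i)).prod
    (MeasurePreserving.id _)

lemma HmulC_HinvC_reflectThrough (w : Fin n → ℂ) (v : ℝ) (k : (Fin n → ℂ) × ℝ) :
    HmulC n (HinvC n (reflectThrough w k)) (w, v) =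
      reflectThrough w (HmulC n (w, v) (HinvC n k)) := by
  refine Prod.ext (funext fun i => ?_) ?_
  · simp only [HmulC, HinvC, reflectThrough, Pi.add_apply, Pi.neg_apply]
    rw [neg_add_eq_sub, ← sub_eq_add_neg, reflectLine_self_sub]
  · simp only [HmulC, HinvC, reflectThrough, Pi.neg_apply, neg_mul, neg_im, map_neg, mul_neg,
      reflectLine_mul_conj]
    ring

lemma HmulC_HinvC_HmulC_HinvC (g k : (Fin n → ℂ) × ℝ) :
    HmulC n (HinvC n (HmulC n g (HinvC n k))) g = k := by
  have hanti : ∀ a b : ℂ, (a * conj b).im = -(b * conj a).im := fun a b => by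
    simp only [mul_im, conj_re, conj_im]; ring
  refine Prod.ext (by simp [HmulC, HinvC]) ?_
  simp only [HmulC, HinvC, Pi.add_apply, Pi.neg_apply, neg_add_rev, neg_neg, add_mul, neg_mul,
    add_im, neg_im, map_neg, mul_neg, Finset.sum_add_distrib, Finset.sum_neg_distrib,
    hanti (k.1 _) (g.1 _), mul_conj, ofReal_im, Finset.sum_const_zero]
  ring

lemma measurePreserving_HinvC : MeasurePreserving (HinvC n) volume volume := by
  rw [Measure.volume_eq_prod]
  exact (Measure.measurePreserving_neg volume).prod (Measure.measurePreserving_neg volume)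

lemma measurePreserving_HmulC_left (g : (Fin n → ℂ) × ℝ) :
    MeasurePreserving (HmulC n g) volume volume := by
  rw [Measure.volume_eq_prod]
  refine (measurePreserving_add_left volume g.1).skew_product
    (g := fun z u => g.2 + u + 1 / 2 * ∑ i, (g.1 i * conj (z i)).im) (by fun_prop)
    (Filter.Eventually.of_forall fun z => ?_)
  exact ((measurePreserving_add_right volume _).comp (measurePreserving_add_left volume g.2)).map_eq

lemma convC_eq_integral_mul_inv (f₁ f₂ : (Fin n → ℂ) × ℝ → ℂ) (g : (Fin n → ℂ) × ℝ) :
    convC n f₁ f₂ g = ∫ k, f₁ (HmulC n g (HinvC n k)) * f₂ k := by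
  have hT := (measurePreserving_HmulC_left g).comp (measurePreserving_HinvC (n := n))
  have hinj : Function.Injective fun k => HmulC n g (HinvC n k) :=
    Function.LeftInverse.injective (g := fun h => HmulC n (HinvC n h) g) (HmulC_HinvC_HmulC_HinvC g)
  rw [convC, ← hT.integral_comp (hT.measurable.measurableEmbedding hinj)]
  simp only [Function.comp_apply, HmulC_HinvC_HmulC_HinvC]

end Heisenberg

theorem polyradial_convolution_commutes_general (n : ℕ)
    (f₁ f₂ : (Fin n → ℂ) × ℝ → ℂ)
    (hp₁ : Polyradial n f₁) (hp₂ : Polyradial n f₂) :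
    ∀ g, convC n f₁ f₂ g = convC n f₂ f₁ g := by
  rintro ⟨w, v⟩
  have hR := measurePreserving_reflectThrough w
  have hRemb := hR.measurable.measurableEmbedding (reflectThrough_involutive w).injective
  calc convC n f₁ f₂ (w, v)
      = ∫ k, f₁ (reflectThrough w k) * f₂ (HmulC n (HinvC n (reflectThrough w k)) (w, v)) :=
        (hR.integral_comp hRemb _).symm
    _ = ∫ k, f₂ (HmulC n (w, v) (HinvC n k)) * f₁ k := by
        simp only [HmulC_HinvC_reflectThrough, hp₁.apply_reflectThrough,
          hp₂.apply_reflectThrough, mul_comm]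
    _ = convC n f₂ f₁ (w, v) := (convC_eq_integral_mul_inv f₂ f₁ (w, v)).symm

theorem polyradial_convolution_commutes (n : ℕ)
    (f₁ f₂ : (Fin n → ℂ) × ℝ → ℂ)
    (hf₁ : Integrable f₁) (hf₂ : Integrable f₂)
    (hp₁ : Polyradial n f₁) (hp₂ : Polyradial n f₂) :
    ∀ g, convC n f₁ f₂ g = convC n f₂ f₁ g :=
  polyradial_convolution_commutes_general n f₁ f₂ hp₁ hp₂
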